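/- Let ρ be a state on ℂ² ⊗ ℂ^n with blocks ρ_{ij} for i, j ∈ {0,1} (the n×n matrices (ρ_{ij})_{kl} = ρ_{(i,k),(j,l)}), and let Π[ρ] = E_{00} ⊗ ρ_{00} + E_{11} ⊗ ρ_{11} be its block-diagonal part. Then Σ_{i,j∈{0,1}} ‖ρ_{ij}‖₁ = 1 + ‖ρ − Π[ρ]‖₁. Consequently, the one-sided negativity of quantumness of ρ equals Q_N^A(ρ) = inf over 2×2 unitaries U of (1/2)‖ρ − Π_U[ρ]‖₁, where Π_U[ρ] = Σ_{i∈{0,1}} (U E_{ii} U† ⊗ I) ρ (U E_{ii} U† ⊗ I). -/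

import Mathlib

/-!
The diagonal blocks `ρ₀₀, ρ₁₁` of a state are positive semidefinite with traces summing to `1`,
so they contribute exactly `1` to `Σ ‖ρᵢⱼ‖₁`. The remainder `ρ - Π[ρ] = E₀₁ ⊗ ρ₀₁ + E₁₀ ⊗ ρ₁₀`
satisfies `|ρ - Π[ρ]|² = E₀₀ ⊗ |ρ₁₀|² + E₁₁ ⊗ |ρ₀₁|²`, whose square root is block diagonal, so
`‖ρ - Π[ρ]‖₁ = ‖ρ₀₁‖₁ + ‖ρ₁₀‖₁`. For the second claim apply this to `σ = (U ⊗ I)† ρ (U ⊗ I)`: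
conjugating back by `U ⊗ I` maps `σ - Π[σ]` to `ρ - Π_U[ρ]`, and the trace norm is unitarily
invariant.
-/

open scoped Kronecker ComplexOrder
open Matrix

/-- The positive semidefinite square root, as `Matrix.PosSemidef.sqrt` was defined in older Mathlib. -/
noncomputable def psdSqrtOld {ι : Type*} [Fintype ι] [DecidableEq ι] {A : Matrix ι ι ℂ}
    (hA : A.PosSemidef) : Matrix ι ι ℂ :=
  (hA.1.eigenvectorUnitary : Matrix ι ι ℂ) * diagonal ((↑) ∘ (√·) ∘ hA.1.eigenvalues) *
    (star hA.1.eigenvectorUnitary : Matrix ι ι ℂ)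

noncomputable def traceNorm {ι : Type*} [Fintype ι] [DecidableEq ι] (A : Matrix ι ι ℂ) : ℝ :=
  ((psdSqrtOld (Matrix.posSemidef_conjTranspose_mul_self A)).trace).re

noncomputable def l1Norm {ι κ : Type*} [Fintype ι] [Fintype κ] (A : Matrix ι κ ℂ) : ℝ :=
  ∑ i, ∑ j, ‖A i j‖

def ptranspose {α β : Type*} (ρ : Matrix (α × β) (α × β) ℂ) : Matrix (α × β) (α × β) ℂ :=
  Matrix.of fun p q => ρ (p.1, q.2) (q.1, p.2)

noncomputable def negativity {α β : Type*} [Fintype α] [Fintype β] [DecidableEq α] [DecidableEq β]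
    (ρ : Matrix (α × β) (α × β) ℂ) : ℝ :=
  (traceNorm (ptranspose ρ) - 1) / 2

def matUnit {ι : Type*} [DecidableEq ι] (i j : ι) : Matrix ι ι ℂ :=
  Matrix.single i j 1

noncomputable def mcs {n : ℕ} (t : Fin n → Fin n → ℂ) :
    Matrix (Fin n × Fin n) (Fin n × Fin n) ℂ :=
  ∑ i, ∑ j, t i j • (matUnit i j ⊗ₖ matUnit i j)

def blockOf {m n : ℕ} (ρ : Matrix (Fin m × Fin n) (Fin m × Fin n) ℂ) (i j : Fin m) :
    Matrix (Fin n) (Fin n) ℂ :=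
  Matrix.of fun k l => ρ (i, k) (j, l)

noncomputable def conjU {m n : ℕ} (U : Matrix.unitaryGroup (Fin m) ℂ)
    (ρ : Matrix (Fin m × Fin n) (Fin m × Fin n) ℂ) : Matrix (Fin m × Fin n) (Fin m × Fin n) ℂ :=
  ((U : Matrix (Fin m) (Fin m) ℂ) ⊗ₖ (1 : Matrix (Fin n) (Fin n) ℂ))ᴴ * ρ *
    ((U : Matrix (Fin m) (Fin m) ℂ) ⊗ₖ (1 : Matrix (Fin n) (Fin n) ℂ))

noncomputable def conjUV {m n : ℕ} (U : Matrix.unitaryGroup (Fin m) ℂ)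
    (V : Matrix.unitaryGroup (Fin n) ℂ)
    (ρ : Matrix (Fin m × Fin n) (Fin m × Fin n) ℂ) : Matrix (Fin m × Fin n) (Fin m × Fin n) ℂ :=
  ((U : Matrix (Fin m) (Fin m) ℂ) ⊗ₖ (V : Matrix (Fin n) (Fin n) ℂ))ᴴ * ρ *
    ((U : Matrix (Fin m) (Fin m) ℂ) ⊗ₖ (V : Matrix (Fin n) (Fin n) ℂ))

noncomputable def QNA {m n : ℕ} (ρ : Matrix (Fin m × Fin n) (Fin m × Fin n) ℂ) : ℝ :=
  ⨅ U : Matrix.unitaryGroup (Fin m) ℂ,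
    ((∑ i, ∑ j, traceNorm (blockOf (conjU U ρ) i j)) - 1) / 2

noncomputable def QNAB {m n : ℕ} (ρ : Matrix (Fin m × Fin n) (Fin m × Fin n) ℂ) : ℝ :=
  ⨅ U : Matrix.unitaryGroup (Fin m) ℂ, ⨅ V : Matrix.unitaryGroup (Fin n) ℂ,
    (l1Norm (conjUV U V ρ) - 1) / 2

/-- Local dephasing of the qubit in the basis `{U e_0, U e_1}`:
`Π_U[ρ] = Σ_i (U E_{ii} U† ⊗ I) ρ (U E_{ii} U† ⊗ I)`. -/
noncomputable def dephase {n : ℕ} (U : Matrix.unitaryGroup (Fin 2) ℂ)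
    (ρ : Matrix (Fin 2 × Fin n) (Fin 2 × Fin n) ℂ) :
    Matrix (Fin 2 × Fin n) (Fin 2 × Fin n) ℂ :=
  ∑ i : Fin 2,
    (((U : Matrix (Fin 2) (Fin 2) ℂ) * matUnit i i * (U : Matrix (Fin 2) (Fin 2) ℂ)ᴴ)
        ⊗ₖ (1 : Matrix (Fin n) (Fin n) ℂ)) * ρ *
      (((U : Matrix (Fin 2) (Fin 2) ℂ) * matUnit i i * (U : Matrix (Fin 2) (Fin 2) ℂ)ᴴ)
        ⊗ₖ (1 : Matrix (Fin n) (Fin n) ℂ))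

open scoped MatrixOrder

section

variable {ι : Type*} [Fintype ι] [DecidableEq ι]

lemma psdSqrtOld_eq_sqrt {A : Matrix ι ι ℂ} (hA : A.PosSemidef) : psdSqrtOld hA = CFC.sqrt A := by
  rw [CFC.sqrt_eq_cfc, cfc_nnreal_eq_real _ A, hA.1.cfc_eq]
  simp only [IsHermitian.cfc, Unitary.conjStarAlgAut_apply, psdSqrtOld]
  congr 3
  funext i
  simp [Real.coe_sqrt, Real.coe_toNNReal', max_eq_left (hA.eigenvalues_nonneg i)]

lemma traceNorm_eq_re_trace_sqrt (A : Matrix ι ι ℂ) :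
    traceNorm A = (CFC.sqrt (Aᴴ * A)).trace.re := by
  rw [traceNorm, psdSqrtOld_eq_sqrt]

lemma traceNorm_eq_re_trace_of_mul_self {A S : Matrix ι ι ℂ} (hS : S.PosSemidef)
    (h : S * S = Aᴴ * A) : traceNorm A = S.trace.re := by
  rw [traceNorm_eq_re_trace_sqrt, CFC.sqrt_unique h hS.nonneg]

lemma traceNorm_of_posSemidef {A : Matrix ι ι ℂ} (hA : A.PosSemidef) :
    traceNorm A = A.trace.re :=
  traceNorm_eq_re_trace_of_mul_self hA (by rw [hA.1.eq])

lemma traceNorm_unitary_conj (A : Matrix ι ι ℂ) {W : Matrix ι ι ℂ} (hW : W ∈ unitaryGroup ι ℂ) :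
    traceNorm (W * A * Wᴴ) = traceNorm A := by
  have hWW : Wᴴ * W = 1 := Unitary.star_mul_self_of_mem hW
  set S := CFC.sqrt (Aᴴ * A)
  have hSS : S * S = Aᴴ * A := CFC.sqrt_mul_sqrt_self _ (posSemidef_conjTranspose_mul_self A).nonneg
  have hS : S.PosSemidef := (CFC.sqrt_nonneg _).posSemidef
  rw [traceNorm_eq_re_trace_sqrt A,
    traceNorm_eq_re_trace_of_mul_self (hS.mul_mul_conjTranspose_same W), trace_mul_cycle,
    hWW, Matrix.one_mul]
  calc W * S * Wᴴ * (W * S * Wᴴ) = W * (S * (Wᴴ * W) * S) * Wᴴ := by simp only [Matrix.mul_assoc]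
    _ = W * (Aᴴ * (Wᴴ * W) * A) * Wᴴ := by rw [hWW, Matrix.mul_one, Matrix.mul_one, hSS]
    _ = (W * A * Wᴴ)ᴴ * (W * A * Wᴴ) := by
      simp only [conjTranspose_mul, conjTranspose_conjTranspose, Matrix.mul_assoc]

lemma trace_conjTranspose_mul_mul_of_mem_unitaryGroup {W : Matrix ι ι ℂ}
    (hW : W ∈ unitaryGroup ι ℂ) (A : Matrix ι ι ℂ) : (Wᴴ * A * W).trace = A.trace := by
  rw [trace_mul_cycle, show W * Wᴴ = 1 from Unitary.mul_star_self_of_mem hW, Matrix.one_mul]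

lemma mul_conjTranspose_mul_mul_mul_conjTranspose {W : Matrix ι ι ℂ}
    (hW : W ∈ unitaryGroup ι ℂ) (A : Matrix ι ι ℂ) : W * (Wᴴ * A * W) * Wᴴ = A := by
  have hWW : W * Wᴴ = 1 := Unitary.mul_star_self_of_mem hW
  rw [← Matrix.mul_assoc, ← Matrix.mul_assoc, hWW, Matrix.one_mul, Matrix.mul_assoc, hWW,
    Matrix.mul_one]

end

lemma matUnit_conjTranspose {ι : Type*} [DecidableEq ι] (i j : ι) :
    (matUnit i j)ᴴ = matUnit j i := by
  simp [matUnit, conjTranspose_single]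

lemma posSemidef_matUnit {ι : Type*} [DecidableEq ι] (i : ι) : (matUnit i i).PosSemidef := by
  rw [matUnit, ← diagonal_single]
  exact PosSemidef.diagonal (Pi.single_nonneg.mpr zero_le_one)

section KroneckerBlocks

variable {ι κ : Type*} [Fintype ι] [DecidableEq ι] [Fintype κ]

lemma matUnit_kron_mul_matUnit_kron (i j k l : ι) (A B : Matrix κ κ ℂ) :
    (matUnit i j ⊗ₖ A) * (matUnit k l ⊗ₖ B) = if j = k then matUnit i l ⊗ₖ (A * B) else 0 := by
  rw [← mul_kronecker_mul]
  split_ifs with h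
  · rw [h, matUnit, matUnit, single_mul_single_same, one_mul, matUnit]
  · simp [matUnit, h]

lemma posSemidef_sum_matUnit_kron {P : ι → Matrix κ κ ℂ} (hP : ∀ i, (P i).PosSemidef) :
    (∑ i, matUnit i i ⊗ₖ P i).PosSemidef :=
  posSemidef_sum _ fun i _ => (posSemidef_matUnit i).kronecker (hP i)

lemma sum_matUnit_kron_mul_self (P : ι → Matrix κ κ ℂ) :
    (∑ i, matUnit i i ⊗ₖ P i) * (∑ i, matUnit i i ⊗ₖ P i) = ∑ i, matUnit i i ⊗ₖ (P i * P i) := by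
  simp [Finset.sum_mul_sum, matUnit_kron_mul_matUnit_kron]

lemma trace_sum_matUnit_kron (P : ι → Matrix κ κ ℂ) :
    (∑ i, matUnit i i ⊗ₖ P i).trace = ∑ i, (P i).trace := by
  simp [trace_sum, trace_kronecker, matUnit, trace_single_eq_same]

lemma conjTranspose_mul_self_sum_matUnit_perm_kron (σ : Equiv.Perm ι) (A : ι → Matrix κ κ ℂ) :
    (∑ i, matUnit (σ i) i ⊗ₖ A i)ᴴ * (∑ i, matUnit (σ i) i ⊗ₖ A i)
      = ∑ i, matUnit i i ⊗ₖ ((A i)ᴴ * A i) := by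
  rw [conjTranspose_sum, Finset.sum_mul_sum]
  simp [conjTranspose_kronecker, matUnit_conjTranspose, matUnit_kron_mul_matUnit_kron,
    σ.injective.eq_iff]

lemma traceNorm_sum_matUnit_perm_kron [DecidableEq κ] (σ : Equiv.Perm ι) (A : ι → Matrix κ κ ℂ) :
    traceNorm (∑ i, matUnit (σ i) i ⊗ₖ A i) = ∑ i, traceNorm (A i) := by
  set S := fun i => CFC.sqrt ((A i)ᴴ * A i)
  have hS i : (S i).PosSemidef := (CFC.sqrt_nonneg _).posSemidef
  have hSS i : S i * S i = (A i)ᴴ * A i :=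
    CFC.sqrt_mul_sqrt_self _ (posSemidef_conjTranspose_mul_self _).nonneg
  rw [traceNorm_eq_re_trace_of_mul_self (posSemidef_sum_matUnit_kron hS), trace_sum_matUnit_kron,
    Complex.re_sum]
  · exact Finset.sum_congr rfl fun i _ => (traceNorm_eq_re_trace_of_mul_self (hS i) (hSS i)).symm
  · rw [sum_matUnit_kron_mul_self, conjTranspose_mul_self_sum_matUnit_perm_kron]
    simp only [hSS]

end KroneckerBlocks

section Bipartite

variable {m n : ℕ}

lemma matUnit_kron_one_mul_mul_matUnit_kron_one (ρ : Matrix (Fin m × Fin n) (Fin m × Fin n) ℂ)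
    (i j : Fin m) :
    (matUnit i i ⊗ₖ (1 : Matrix (Fin n) (Fin n) ℂ)) * ρ * (matUnit j j ⊗ₖ 1)
      = matUnit i j ⊗ₖ blockOf ρ i j := by
  ext ⟨a, k⟩ ⟨b, l⟩
  simp only [mul_apply, Fintype.sum_prod_type, kroneckerMap_apply, matUnit, single, one_apply,
    of_apply, blockOf]
  by_cases i = a <;> by_cases j = b <;> simp_all

lemma posSemidef_blockOf {ρ : Matrix (Fin m × Fin n) (Fin m × Fin n) ℂ} (hρ : ρ.PosSemidef)
    (i : Fin m) : (blockOf ρ i i).PosSemidef :=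
  hρ.submatrix _

lemma sum_trace_blockOf (ρ : Matrix (Fin m × Fin n) (Fin m × Fin n) ℂ) :
    ∑ i, (blockOf ρ i i).trace = ρ.trace := by
  simp [trace, blockOf, Fintype.sum_prod_type]

lemma kronecker_one_mem_unitaryGroup (U : unitaryGroup (Fin m) ℂ) :
    (U : Matrix (Fin m) (Fin m) ℂ) ⊗ₖ (1 : Matrix (Fin n) (Fin n) ℂ)
      ∈ unitaryGroup (Fin m × Fin n) ℂ :=
  kronecker_mem_unitary U.2 (one_mem _)

lemma posSemidef_conjU (U : unitaryGroup (Fin m) ℂ)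
    {ρ : Matrix (Fin m × Fin n) (Fin m × Fin n) ℂ} (hρ : ρ.PosSemidef) :
    (conjU U ρ).PosSemidef :=
  hρ.conjTranspose_mul_mul_same _

lemma trace_conjU (U : unitaryGroup (Fin m) ℂ) (ρ : Matrix (Fin m × Fin n) (Fin m × Fin n) ℂ) :
    (conjU U ρ).trace = ρ.trace :=
  trace_conjTranspose_mul_mul_of_mem_unitaryGroup (kronecker_one_mem_unitaryGroup U) ρ

lemma mul_conjU_mul_conjTranspose (U : unitaryGroup (Fin m) ℂ)
    (ρ : Matrix (Fin m × Fin n) (Fin m × Fin n) ℂ) :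
    ((U : Matrix (Fin m) (Fin m) ℂ) ⊗ₖ (1 : Matrix (Fin n) (Fin n) ℂ)) * conjU U ρ *
      ((U : Matrix (Fin m) (Fin m) ℂ) ⊗ₖ (1 : Matrix (Fin n) (Fin n) ℂ))ᴴ = ρ :=
  mul_conjTranspose_mul_mul_mul_conjTranspose (kronecker_one_mem_unitaryGroup U) ρ

end Bipartite

section Qubit

variable {n : ℕ}

lemma dephase_eq_conj_blockDiag (U : unitaryGroup (Fin 2) ℂ)
    (ρ : Matrix (Fin 2 × Fin n) (Fin 2 × Fin n) ℂ) :
    dephase U ρ = ((U : Matrix (Fin 2) (Fin 2) ℂ) ⊗ₖ (1 : Matrix (Fin n) (Fin n) ℂ)) *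
      (matUnit (0 : Fin 2) 0 ⊗ₖ blockOf (conjU U ρ) 0 0
        + matUnit (1 : Fin 2) 1 ⊗ₖ blockOf (conjU U ρ) 1 1) *
      ((U : Matrix (Fin 2) (Fin 2) ℂ) ⊗ₖ (1 : Matrix (Fin n) (Fin n) ℂ))ᴴ := by
  have hconj (i : Fin 2) : ((U : Matrix (Fin 2) (Fin 2) ℂ) * matUnit i i * (U : Matrix _ _ ℂ)ᴴ)
      ⊗ₖ (1 : Matrix (Fin n) (Fin n) ℂ) = ((U : Matrix (Fin 2) (Fin 2) ℂ) ⊗ₖ 1) *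
        (matUnit i i ⊗ₖ 1) * ((U : Matrix (Fin 2) (Fin 2) ℂ) ⊗ₖ 1)ᴴ := by
    rw [conjTranspose_kronecker, conjTranspose_one, ← mul_kronecker_mul, ← mul_kronecker_mul,
      Matrix.one_mul, Matrix.one_mul]
  simp only [dephase, Fin.sum_univ_two, hconj, ← matUnit_kron_one_mul_mul_matUnit_kron_one]
  simp only [conjU, Matrix.mul_add, Matrix.add_mul, Matrix.mul_assoc]

lemma sub_blockDiag_eq_sum_swap (ρ : Matrix (Fin 2 × Fin n) (Fin 2 × Fin n) ℂ) :
    ρ - (matUnit (0 : Fin 2) 0 ⊗ₖ blockOf ρ 0 0 + matUnit (1 : Fin 2) 1 ⊗ₖ blockOf ρ 1 1)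
      = ∑ i, matUnit (Equiv.swap 0 1 i) i ⊗ₖ blockOf ρ (Equiv.swap 0 1 i) i := by
  ext ⟨a, k⟩ ⟨b, l⟩
  fin_cases a <;> fin_cases b <;> simp [blockOf, matUnit, single, Fin.sum_univ_two]

lemma sum_traceNorm_blockOf {ρ : Matrix (Fin 2 × Fin n) (Fin 2 × Fin n) ℂ} (hρ : ρ.PosSemidef)
    (htr : ρ.trace = 1) :
    (∑ i : Fin 2, ∑ j : Fin 2, traceNorm (blockOf ρ i j))
      = 1 + traceNorm (ρ - (matUnit (0 : Fin 2) 0 ⊗ₖ blockOf ρ 0 0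
          + matUnit (1 : Fin 2) 1 ⊗ₖ blockOf ρ 1 1)) := by
  have hdiag : (blockOf ρ 0 0).trace.re + (blockOf ρ 1 1).trace.re = 1 := by
    rw [← Complex.add_re, ← Fin.sum_univ_two fun i => (blockOf ρ i i).trace, sum_trace_blockOf,
      htr, Complex.one_re]
  rw [sub_blockDiag_eq_sum_swap, traceNorm_sum_matUnit_perm_kron]
  simp only [Fin.sum_univ_two, Equiv.swap_apply_left, Equiv.swap_apply_right,
    traceNorm_of_posSemidef (posSemidef_blockOf hρ _)]
  linarith

end Qubit

/-- for a state on `ℂ² ⊗ ℂ^n`, `Σ_{i,j} ‖ρ_{ij}‖₁ = 1 + ‖ρ − Π[ρ]‖₁`,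
where `Π[ρ] = E₀₀ ⊗ ρ₀₀ + E₁₁ ⊗ ρ₁₁`; consequently the one-sided negativity of
quantumness equals the minimal trace-norm disturbance under local qubit dephasing,
up to the factor 1/2. -/
theorem stmt_7 {n : ℕ} (ρ : Matrix (Fin 2 × Fin n) (Fin 2 × Fin n) ℂ)
    (hpos : ρ.PosSemidef) (htr : ρ.trace = 1) :
    (∑ i : Fin 2, ∑ j : Fin 2, traceNorm (blockOf ρ i j))
        = 1 + traceNorm (ρ - (matUnit (0 : Fin 2) 0 ⊗ₖ blockOf ρ 0 0
            + matUnit (1 : Fin 2) 1 ⊗ₖ blockOf ρ 1 1)) ∧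
    QNA ρ = ⨅ U : Matrix.unitaryGroup (Fin 2) ℂ, (1/2) * traceNorm (ρ - dephase U ρ) := by
  refine ⟨sum_traceNorm_blockOf hpos htr, iInf_congr fun U => ?_⟩
  rw [sum_traceNorm_blockOf (posSemidef_conjU U hpos) (by rw [trace_conjU, htr]),
    ← traceNorm_unitary_conj _ (kronecker_one_mem_unitaryGroup U), Matrix.mul_sub, Matrix.sub_mul,
    mul_conjU_mul_conjTranspose, ← dephase_eq_conj_blockDiag]
  ring
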